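/- Let X be a set carrying two metrics ρ_1 and ρ_2 that are strongly equivalent (i.e., there exist constants c, C > 0 with c·ρ_1(x, y) ≤ ρ_2(x, y) ≤ C·ρ_1(x, y) for all x, y ∈ X), and suppose (X, ρ_1) is doubling. Let H be a hypothesis class on X. Then H satisfies the r-UUS property with respect to ρ_1 for some r > 0 if and only if it satisfies the r'-UUS property with respect to ρ_2 for some r' > 0. Moreover, for all ε, ε', δ, δ' > 0, H is (ε, ε')-uniformly generatable with respect to ρ_1 if and only if it is (δ, δ')-uniformly generatable with respect to ρ_2, and likewise for non-uniform generatability. -/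

import Mathlib

open Set

namespace Gen

variable {X : Type*}

/-- The support of a hypothesis `h : X → Bool`: its set of positive examples. -/
def supp (h : X → Bool) : Set X := {x | h x = true}

/-- Closed ball of radius `ε` around `c`, with respect to an explicit distance `ρ`. -/
def ball (ρ : X → X → ℝ) (c : X) (ε : ℝ) : Set X := {y | ρ c y ≤ ε}

/-- Closed `ε`-neighborhood of a set `A`: points whose infimal distance to `A` is `≤ ε`. -/
def setBall (ρ : X → X → ℝ) (A : Set X) (ε : ℝ) : Set X :=
  {y | sInf ((fun a => ρ a y) '' A) ≤ ε}

/-- The `ε`-covering number of `A` with respect to `ρ`, valued in `ℕ∞`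
(`⊤` if no finite cover exists). -/
noncomputable def covN (ρ : X → X → ℝ) (ε : ℝ) (A : Set X) : ℕ∞ :=
  sInf {n : ℕ∞ | ∃ S : Finset X, (S.card : ℕ∞) = n ∧ A ⊆ ⋃ θ ∈ S, ball ρ θ ε}

/-- `H` satisfies the `r`-Uniformly Unbounded Support property w.r.t. `ρ`. -/
def UUS (ρ : X → X → ℝ) (H : Set (X → Bool)) (r : ℝ) : Prop :=
  ∀ h ∈ H, covN ρ r (supp h) = ⊤

/-- The list of the first `s` terms `x 0, …, x (s-1)` of a sequence. -/
def prefList (x : ℕ → X) (s : ℕ) : List X := List.ofFn (fun i : Fin s => x i)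

/-- The set of the first `s` terms of a sequence. -/
def prefSet (x : ℕ → X) (s : ℕ) : Set X := x '' Iio s

/-- `(ε, ε')`-uniform generatability. -/
def UnifGen (ρ : X → X → ℝ) (ε ε' : ℝ) (H : Set (X → Bool)) : Prop :=
  ∃ G : List X → X, ∃ d : ℕ, ∀ h ∈ H, ∀ x : ℕ → X, (∀ i, x i ∈ supp h) →
    ∀ t : ℕ, (d : ℕ∞) ≤ covN ρ ε (prefSet x t) →
      ∀ s ≥ t, G (prefList x s) ∈ supp h \ setBall ρ (prefSet x s) ε'

/-- `(ε, ε')`-non-uniform generatability. -/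
def NonUnifGen (ρ : X → X → ℝ) (ε ε' : ℝ) (H : Set (X → Bool)) : Prop :=
  ∃ G : List X → X, ∀ h ∈ H, ∃ d : ℕ, ∀ x : ℕ → X, (∀ i, x i ∈ supp h) →
    ∀ t : ℕ, (d : ℕ∞) ≤ covN ρ ε (prefSet x t) →
      ∀ s ≥ t, G (prefList x s) ∈ supp h \ setBall ρ (prefSet x s) ε'

/-- `(ε, ε')`-generatability in the limit. -/
def GenInLimit (ρ : X → X → ℝ) (ε ε' : ℝ) (H : Set (X → Bool)) : Prop :=
  ∃ G : List X → X, ∀ h ∈ H, ∀ x : ℕ → X, (∀ i, x i ∈ supp h) →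
    supp h ⊆ setBall ρ (range x) ε →
      ∃ t : ℕ, ∀ s ≥ t, G (prefList x s) ∈ supp h \ setBall ρ (prefSet x s) ε'

/-- The closure `⟨x_1,…,x_t⟩_H` of a finite sample: intersection of the supports of all
hypotheses in the version space. -/
def clos (H : Set (X → Bool)) (l : List X) : Set X :=
  ⋂ h ∈ {h | h ∈ H ∧ ∀ y ∈ l, y ∈ supp h}, supp h

/-- The `(ε, ε')`-closure dimension of `H`, valued in `ℕ∞`. -/
noncomputable def closureDim (ρ : X → X → ℝ) (ε ε' : ℝ) (H : Set (X → Bool)) : ℕ∞ :=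
  sSup (insert 0 {d : ℕ∞ | ∃ h ∈ H, ∃ l : List X, (∀ y ∈ l, y ∈ supp h) ∧
    covN ρ ε {y | y ∈ l} = d ∧ covN ρ ε' (clos H l) ≠ ⊤})

/-- `ρ` is a metric on `X`. -/
def IsMetricDist (ρ : X → X → ℝ) : Prop :=
  (∀ x y, ρ x y = 0 ↔ x = y) ∧ (∀ x y, ρ x y = ρ y x) ∧
    ∀ x y z, ρ x z ≤ ρ x y + ρ y z

/-- `(X, ρ)` is doubling: every closed ball of radius `r` can be covered by at most `M`
closed balls of radius `r / 2`. -/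
def Doubling (ρ : X → X → ℝ) : Prop :=
  ∃ M : ℕ, ∀ (x : X) (r : ℝ), 0 < r →
    ∃ S : Finset X, S.card ≤ M ∧ ball ρ x r ⊆ ⋃ θ ∈ S, ball ρ θ (r / 2)

/-!
Under doubling and strong equivalence, covering numbers for `ρ₁` and `ρ₂` at any two positive
scales agree up to a constant factor: doubling pays a bounded factor per halving of the radius, and
the equivalence only rescales radii. The UUS property transfers at once.

Uniform generatability is governed by the closure dimension. If `G` generates uniformly, then for
every sample `l` with large `ε`-covering number, feeding `G` its own outputs starting from `l`
gives an `ε'`-separated sequence inside the closure of `l`, so that closure has infinite covering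
number. Conversely, if such closures have infinite covering number, choosing a point of the
closure far from the sample is a uniform generator. Both conditions only refer to covering
numbers being large or infinite, so they survive a change of metric and of scales. Non-uniform
generatability is uniform generatability of each sublevel set of the threshold function.
-/

lemma IsMetricDist.nonneg {ρ : X → X → ℝ} (hρ : IsMetricDist ρ) (x y : X) : 0 ≤ ρ x y := by
  have := hρ.2.2 x y x
  rw [(hρ.1 x x).2 rfl, hρ.2.1 y x] at this
  linarith

section CoveringNumbers

variable {ρ σ τ : X → X → ℝ}

lemma covN_le_card {a : ℝ} {A : Set X} {S : Finset X} (h : A ⊆ ⋃ θ ∈ S, ball ρ θ a) :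
    covN ρ a A ≤ S.card :=
  sInf_le ⟨S, rfl, h⟩

lemma covN_mono {a : ℝ} {A B : Set X} (h : A ⊆ B) : covN ρ a A ≤ covN ρ a B :=
  le_sInf fun _ ⟨S, hS, hB⟩ => sInf_le ⟨S, hS, h.trans hB⟩

lemma covN_le_covN_of_ball_subset {a b : ℝ} (h : ∀ θ, ball σ θ a ⊆ ball τ θ b) (A : Set X) :
    covN τ b A ≤ covN σ a A :=
  le_sInf fun _ ⟨S, hS, hA⟩ => sInf_le ⟨S, hS, hA.trans (iUnion₂_mono fun θ _ => h θ)⟩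

lemma covN_anti {a b : ℝ} (hab : a ≤ b) (A : Set X) : covN ρ b A ≤ covN ρ a A :=
  covN_le_covN_of_ball_subset (fun _ _ hy => le_trans hy hab) A

lemma covN_le_covN_of_mul_le {c a b : ℝ} (hc : 0 < c) (h : ∀ x y, c * σ x y ≤ τ x y)
    (hab : b ≤ c * a) (A : Set X) : covN σ a A ≤ covN τ b A :=
  covN_le_covN_of_ball_subset (fun θ y hy => by
    have : c * σ θ y ≤ c * a := (h θ y).trans (hy.trans hab)
    exact le_of_mul_le_mul_left this hc) A

lemma covN_eq_top_iff {a : ℝ} {A : Set X} :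
    covN ρ a A = ⊤ ↔ ∀ S : Finset X, ¬ A ⊆ ⋃ θ ∈ S, ball ρ θ a := by
  refine ⟨fun h S hS => ?_, fun h => sInf_eq_top.2 fun _ ⟨S, _, hS⟩ => (h S hS).elim⟩
  exact ENat.natCast_ne_top _ (top_le_iff.1 (h ▸ covN_le_card hS))

lemma nonempty_of_le_covN {a : ℝ} {A : Set X} {d : ℕ} (hd : 0 < d) (h : (d : ℕ∞) ≤ covN ρ a A) :
    A.Nonempty := by
  rw [nonempty_iff_ne_empty]
  rintro rfl
  have : covN ρ a (∅ : Set X) ≤ (∅ : Finset X).card := covN_le_card (by simp)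
  have : (d : ℕ∞) ≤ 0 := by simpa using h.trans this
  exact hd.ne' (by exact_mod_cast nonpos_iff_eq_zero.1 this)

lemma exists_finset_card_eq_covN {a : ℝ} {A : Set X} (h : covN ρ a A ≠ ⊤) :
    ∃ S : Finset X, (S.card : ℕ∞) = covN ρ a A ∧ A ⊆ ⋃ θ ∈ S, ball ρ θ a := by
  have hne : {n : ℕ∞ | ∃ S : Finset X, (S.card : ℕ∞) = n ∧ A ⊆ ⋃ θ ∈ S, ball ρ θ a}.Nonempty :=
    nonempty_iff_ne_empty.2 fun he => h (by rw [covN, he, sInf_empty])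
  exact csInf_mem hne

lemma covN_le_mul_of_forall_ball_subset {a b : ℝ} {K : ℕ} (hK : 0 < K)
    (h : ∀ θ, ∃ T : Finset X, T.card ≤ K ∧ ball σ θ a ⊆ ⋃ η ∈ T, ball τ η b) (A : Set X) :
    covN τ b A ≤ K * covN σ a A := by
  classical
  rcases eq_or_ne (covN σ a A) ⊤ with htop | hfin
  · simp [htop, ENat.mul_top (Nat.cast_ne_zero.2 hK.ne')]
  obtain ⟨S, hS, hA⟩ := exists_finset_card_eq_covN hfin
  choose T hTcard hT using h
  have hcover : A ⊆ ⋃ η ∈ S.biUnion T, ball τ η b := fun y hy => by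
    obtain ⟨θ, hθ, hyθ⟩ : ∃ θ ∈ S, y ∈ ball σ θ a := by simpa using hA hy
    obtain ⟨η, hη, hyη⟩ : ∃ η ∈ T θ, y ∈ ball τ η b := by simpa using hT θ hyθ
    exact mem_biUnion (Finset.mem_biUnion.2 ⟨θ, hθ, hη⟩) hyη
  calc covN τ b A ≤ (S.biUnion T).card := covN_le_card hcover
    _ ≤ (S.card * K : ℕ) := by
        exact_mod_cast Finset.card_biUnion_le.trans
          (Finset.sum_le_card_nsmul _ _ _ fun θ _ => hTcard θ)
    _ = K * covN σ a A := by rw [← hS]; push_cast; ring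

lemma covN_eq_top_of_pairwise_lt {ι : Type*} [Infinite ι] (hρ : IsMetricDist ρ) {r : ℝ}
    {A : Set X} (f : ι → X) (hfA : ∀ i, f i ∈ A) (hf : Pairwise fun i j => r < ρ (f i) (f j)) :
    covN ρ (r / 2) A = ⊤ := by
  refine covN_eq_top_iff.2 fun S hS => ?_
  have hcenter (i : ι) : ∃ θ : S, ρ θ (f i) ≤ r / 2 := by simpa [ball] using hS (hfA i)
  choose g hg using hcenter
  obtain ⟨i, j, hij, hg_eq⟩ := Finite.exists_ne_map_eq_of_infinite g
  have hi := hg i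
  have hj := hg j
  rw [← hg_eq] at hj
  have := hρ.2.2 (f i) (g i) (f j)
  rw [hρ.2.1 (f i) (g i)] at this
  linarith [hf hij]

lemma covN_prefSet_le (hρ : IsMetricDist ρ) {a : ℝ} (ha : 0 ≤ a) (x : ℕ → X) (s : ℕ) :
    covN ρ a (prefSet x s) ≤ s := by
  classical
  have hcard : (((Finset.range s).image x).card : ℕ∞) ≤ s := by
    exact_mod_cast Finset.card_image_le.trans (Finset.card_range s).le
  refine (covN_le_card fun y hy => ?_).trans hcard
  obtain ⟨i, hi, rfl⟩ := hy
  exact mem_biUnion (Finset.mem_image_of_mem x (Finset.mem_range.2 hi))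
    (by simp [ball, (hρ.1 _ _).2 rfl, ha])

end CoveringNumbers

def CovNBoundedBy (σ τ : X → X → ℝ) : Prop :=
  ∀ a b : ℝ, 0 < a → 0 < b → ∃ K : ℕ, 0 < K ∧ ∀ A : Set X, covN σ a A ≤ K * covN τ b A

section CovNBoundedBy

variable {ρ σ τ : X → X → ℝ}

lemma Doubling.covN_div_two_pow_le (hdbl : Doubling ρ) :
    ∃ M : ℕ, 0 < M ∧ ∀ (b : ℝ), 0 < b → ∀ (k : ℕ) (A : Set X),
      covN ρ (b / 2 ^ k) A ≤ (M ^ k : ℕ) * covN ρ b A := by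
  obtain ⟨M, hM⟩ := hdbl
  refine ⟨max M 1, by omega, fun b hb k A => ?_⟩
  induction k with
  | zero => simp
  | succ k ih =>
    have hstep := covN_le_mul_of_forall_ball_subset (σ := ρ) (a := b / 2 ^ k)
      (b := b / 2 ^ (k + 1)) (K := max M 1) (by omega) (fun θ => by
        obtain ⟨S, hS, hcov⟩ := hM θ (b / 2 ^ k) (by positivity)
        exact ⟨S, hS.trans (le_max_left _ _), by rwa [pow_succ, ← div_div]⟩) A
    calc covN ρ (b / 2 ^ (k + 1)) A ≤ (max M 1 : ℕ) * covN ρ (b / 2 ^ k) A := hstep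
      _ ≤ (max M 1 : ℕ) * ((max M 1 ^ k : ℕ) * covN ρ b A) := mul_le_mul_right ih _
      _ = (max M 1 ^ (k + 1) : ℕ) * covN ρ b A := by push_cast; ring

lemma Doubling.covNBoundedBy_self (hdbl : Doubling ρ) : CovNBoundedBy ρ ρ := by
  obtain ⟨M, hM, hpow⟩ := hdbl.covN_div_two_pow_le
  intro a b ha hb
  obtain ⟨k, hk⟩ := pow_unbounded_of_one_lt (b / a) one_lt_two
  have hbk : b / 2 ^ k ≤ a := by
    rw [div_lt_iff₀ ha] at hk
    rw [div_le_iff₀ (by positivity)]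
    linarith
  exact ⟨M ^ k, by positivity, fun A => (covN_anti hbk A).trans (hpow b hb k A)⟩

lemma CovNBoundedBy.of_mul_le {c : ℝ} (hc : 0 < c) (h : ∀ x y, c * σ x y ≤ τ x y)
    (hσ : CovNBoundedBy σ σ) : CovNBoundedBy σ τ := by
  intro a b ha hb
  obtain ⟨K, hK, hKA⟩ := hσ a (b / c) ha (by positivity)
  refine ⟨K, hK, fun A => (hKA A).trans (mul_le_mul_right ?_ _)⟩
  exact covN_le_covN_of_mul_le hc h (by rw [mul_div_cancel₀ _ hc.ne']) A

lemma CovNBoundedBy.of_le_mul {C : ℝ} (hC : 0 < C) (h : ∀ x y, σ x y ≤ C * τ x y)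
    (hτ : CovNBoundedBy τ τ) : CovNBoundedBy σ τ := by
  intro a b ha hb
  obtain ⟨K, hK, hKA⟩ := hτ (a / C) b (by positivity) hb
  refine ⟨K, hK, fun A => le_trans ?_ (hKA A)⟩
  refine covN_le_covN_of_mul_le (inv_pos.2 hC) (fun x y => ?_) (by rw [div_eq_inv_mul]) A
  rw [inv_mul_le_iff₀ hC]
  exact h x y

lemma CovNBoundedBy.covN_eq_top (h : CovNBoundedBy σ τ) {a b : ℝ} (ha : 0 < a) (hb : 0 < b)
    {A : Set X} (hA : covN σ a A = ⊤) : covN τ b A = ⊤ := by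
  obtain ⟨K, -, hKA⟩ := h a b ha hb
  have := hKA A
  rw [hA, top_le_iff] at this
  by_contra hne
  exact WithTop.mul_ne_top (ENat.natCast_ne_top K) hne this

lemma CovNBoundedBy.le_covN (h : CovNBoundedBy σ τ) {a b : ℝ} (ha : 0 < a) (hb : 0 < b) :
    ∃ K : ℕ, ∀ (d : ℕ) (A : Set X), ((K * d : ℕ) : ℕ∞) ≤ covN σ a A → (d : ℕ∞) ≤ covN τ b A := by
  obtain ⟨K, hK, hKA⟩ := h a b ha hb
  refine ⟨K, fun d A hd => ?_⟩
  rw [← ENat.mul_le_mul_left_iff (a := K) (by exact_mod_cast hK.ne') (ENat.natCast_ne_top K)]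
  exact_mod_cast hd.trans (hKA A)

lemma CovNBoundedBy.uus (h : CovNBoundedBy σ τ) {H : Set (X → Bool)} {r r' : ℝ} (hr : 0 < r)
    (hr' : 0 < r') (hH : UUS σ H r) : UUS τ H r' :=
  fun f hf => h.covN_eq_top hr hr' (hH f hf)

end CovNBoundedBy

lemma setOf_mem_prefList (x : ℕ → X) (s : ℕ) : {y | y ∈ prefList x s} = prefSet x s := by
  ext y
  simp only [prefList, mem_ofPred_eq, List.mem_ofFn, prefSet, mem_image, mem_Iio]
  exact ⟨fun ⟨i, hi⟩ => ⟨i, i.2, hi⟩, fun ⟨i, hi, hy⟩ => ⟨⟨i, hi⟩, hy⟩⟩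

lemma prefList_getD (L : List X) (a : X) {n : ℕ} (hn : n ≤ L.length) :
    prefList (fun j => L.getD j a) n = L.take n := by
  apply List.ext_getElem (by simp [prefList, hn])
  intro i _ _
  simp only [prefList, List.getElem_ofFn, List.getElem_take]
  exact List.getD_eq_getElem _ _ _

lemma prefSet_mono (x : ℕ → X) {t s : ℕ} (h : t ≤ s) : prefSet x t ⊆ prefSet x s :=
  image_mono (Iio_subset_Iio h)

section SetBall

variable {ρ : X → X → ℝ}

lemma lt_of_notMem_setBall (hρ : IsMetricDist ρ) {A : Set X} {b : ℝ} {p a : X}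
    (hp : p ∉ setBall ρ A b) (ha : a ∈ A) : b < ρ a p := by
  by_contra! hle
  have hbdd : BddBelow ((fun z => ρ z p) '' A) := ⟨0, forall_mem_image.2 fun z _ => hρ.nonneg z p⟩
  exact hp ((csInf_le hbdd (mem_image_of_mem _ ha)).trans hle)

lemma setBall_subset_biUnion {A : Set X} (hA : A.Finite) (hne : A.Nonempty) (b : ℝ) :
    setBall ρ A b ⊆ ⋃ θ ∈ hA.toFinset, ball ρ θ b := fun y hy => by
  obtain ⟨a, ha, hay⟩ := (hne.image fun a => ρ a y).csInf_mem (hA.image _)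
  exact mem_biUnion (hA.mem_toFinset.2 ha) (hay.trans_le hy)

lemma nonempty_diff_setBall {A B : Set X} (hA : A.Finite) (hne : A.Nonempty) {b : ℝ}
    (hB : covN ρ b B = ⊤) : (B \ setBall ρ A b).Nonempty := by
  by_contra! hempty
  rw [sdiff_eq_empty] at hempty
  exact covN_eq_top_iff.1 hB _ (hempty.trans (setBall_subset_biUnion hA hne b))

end SetBall

lemma clos_subset_supp {H : Set (X → Bool)} {h : X → Bool} {l : List X} (hh : h ∈ H)
    (hl : ∀ y ∈ l, y ∈ supp h) : clos H l ⊆ supp h :=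
  biInter_subset_of_mem (show h ∈ {h | h ∈ H ∧ ∀ y ∈ l, y ∈ supp h} from ⟨hh, hl⟩)

lemma closureDim_lt_top_iff {ρ : X → X → ℝ} {α β : ℝ} {H : Set (X → Bool)} :
    closureDim ρ α β H < ⊤ ↔ ∃ d : ℕ, ∀ h ∈ H, ∀ l : List X, (∀ y ∈ l, y ∈ supp h) →
      (d : ℕ∞) ≤ covN ρ α {y | y ∈ l} → covN ρ β (clos H l) = ⊤ := by
  constructor
  · intro hlt
    obtain ⟨n, hn⟩ := ENat.ne_top_iff_exists.1 hlt.ne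
    refine ⟨n + 1, fun h hh l hl hd => ?_⟩
    by_contra hne
    have : covN ρ α {y | y ∈ l} ≤ n :=
      hn ▸ le_sSup (mem_insert_of_mem _ ⟨h, hh, l, hl, rfl, hne⟩)
    exact absurd (hd.trans this) (by exact_mod_cast Nat.not_succ_le_self n)
  · rintro ⟨d, hd⟩
    refine lt_of_le_of_lt (sSup_le ?_) (ENat.natCast_lt_top d)
    rintro _ (rfl | ⟨h, hh, l, hl, rfl, hne⟩)
    · exact zero_le
    · by_contra! hlt
      exact hne (hd h hh l hl hlt.le)

def genExtend (G : List X → X) (l : List X) : ℕ → List X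
  | 0 => l
  | n + 1 => genExtend G l n ++ [G (genExtend G l n)]

lemma prefix_genExtend (G : List X → X) (l : List X) (n : ℕ) : l <+: genExtend G l n := by
  induction n with
  | zero => exact List.prefix_refl l
  | succ n ih => exact ih.trans (List.prefix_append _ _)

lemma apply_genExtend_mem (G : List X → X) (l : List X) {m n : ℕ} (hmn : m < n) :
    G (genExtend G l m) ∈ genExtend G l n := by
  induction n with
  | zero => omega
  | succ n ih =>
    rcases Nat.lt_succ_iff_lt_or_eq.1 hmn with h | rfl
    · exact List.mem_append_left _ (ih h)
    · exact List.mem_append_right _ (List.mem_singleton_self _)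

/-- `UnifGen ρ ε ε' H` unfolds to `∃ G d, IsUnifGenerator ρ ε ε' H G d`. -/
def IsUnifGenerator (ρ : X → X → ℝ) (ε ε' : ℝ) (H : Set (X → Bool)) (G : List X → X) (d : ℕ) :
    Prop :=
  ∀ h ∈ H, ∀ x : ℕ → X, (∀ i, x i ∈ supp h) →
    ∀ t : ℕ, (d : ℕ∞) ≤ covN ρ ε (prefSet x t) →
      ∀ s ≥ t, G (prefList x s) ∈ supp h \ setBall ρ (prefSet x s) ε'

namespace IsUnifGenerator

variable {ρ : X → X → ℝ} {ε ε' : ℝ} {H : Set (X → Bool)} {G : List X → X} {d : ℕ}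
  {h : X → Bool} {l : List X}

/-- The guarantee of a uniform generator only involves finite prefixes, so it applies to every
finite list extending a list that triggers it. -/
lemma apply_mem_of_prefix (hG : IsUnifGenerator ρ ε ε' H G d) (hh : h ∈ H) {L : List X}
    (hlL : l <+: L) (hL : ∀ y ∈ L, y ∈ supp h) (hl : l ≠ [])
    (hd : (d : ℕ∞) ≤ covN ρ ε {y | y ∈ l}) : G L ∈ supp h \ setBall ρ {y | y ∈ L} ε' := by
  set x : ℕ → X := fun j => L.getD j (l.head hl)
  have hx (j : ℕ) : x j ∈ supp h := by
    rcases lt_or_ge j L.length with hj | hj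
    · simpa only [x, List.getD_eq_getElem _ _ hj] using hL _ (List.getElem_mem hj)
    · simpa only [x, List.getD_eq_default _ _ hj] using hL _ (hlL.subset (List.head_mem hl))
  have hpref {n : ℕ} (hn : n ≤ L.length) : {y | y ∈ L.take n} = prefSet x n := by
    rw [← prefList_getD L _ hn, setOf_mem_prefList]
  have hlx : (d : ℕ∞) ≤ covN ρ ε (prefSet x l.length) := by
    rwa [← hpref hlL.length_le, ← List.prefix_iff_eq_take.1 hlL]
  have := hG h hh x hx l.length hlx L.length hlL.length_le
  rwa [← hpref le_rfl, prefList_getD L _ le_rfl, List.take_length] at this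

lemma genExtend_subset_supp (hG : IsUnifGenerator ρ ε ε' H G d) (hh : h ∈ H)
    (hlh : ∀ y ∈ l, y ∈ supp h) (hl : l ≠ []) (hd : (d : ℕ∞) ≤ covN ρ ε {y | y ∈ l}) (n : ℕ) :
    ∀ y ∈ genExtend G l n, y ∈ supp h := by
  induction n with
  | zero => exact hlh
  | succ n ih =>
    intro y hy
    rcases List.mem_append.1 hy with hy | hy
    · exact ih y hy
    · rw [List.mem_singleton.1 hy]
      exact (hG.apply_mem_of_prefix hh (prefix_genExtend G l n) ih hl hd).1

/-- Running `G` from any triggering sample `l` produces an `ε'`-separated sequence inside the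
closure of `l`, so that closure cannot be covered by finitely many `ε' / 2`-balls. -/
lemma closureDim_lt_top (hρ : IsMetricDist ρ) (hG : IsUnifGenerator ρ ε ε' H G d) :
    closureDim ρ ε (ε' / 2) H < ⊤ := by
  refine closureDim_lt_top_iff.2 ⟨d + 1, fun h hh l hlh hd => ?_⟩
  have hl : l ≠ [] := fun hnil => by
    simpa [hnil] using nonempty_of_le_covN d.succ_pos hd
  have hd' : (d : ℕ∞) ≤ covN ρ ε {y | y ∈ l} := le_trans (by norm_cast; omega) hd
  set z : ℕ → X := fun n => G (genExtend G l n)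
  have hz_clos (n : ℕ) : z n ∈ clos H l := mem_iInter₂.2 fun h' ⟨hh', hlh'⟩ =>
    hG.genExtend_subset_supp hh' hlh' hl hd' (n + 1) _ (apply_genExtend_mem G l n.lt_succ_self)
  have hz_sep {m n : ℕ} (hmn : m < n) : ε' < ρ (z m) (z n) :=
    lt_of_notMem_setBall hρ (hG.apply_mem_of_prefix hh (prefix_genExtend G l n)
      (hG.genExtend_subset_supp hh hlh hl hd' n) hl hd').2 (apply_genExtend_mem G l hmn)
  refine covN_eq_top_of_pairwise_lt hρ z hz_clos fun m n hmn => ?_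
  rcases hmn.lt_or_gt with hlt | hgt
  · exact hz_sep hlt
  · exact hρ.2.1 (z n) (z m) ▸ hz_sep hgt

end IsUnifGenerator

lemma unifGen_of_closureDim_lt_top [Nonempty X] {ρ : X → X → ℝ} {α β : ℝ} {H : Set (X → Bool)}
    (hH : closureDim ρ α β H < ⊤) : UnifGen ρ α β H := by
  obtain ⟨d, hd⟩ := closureDim_lt_top_iff.1 hH
  refine ⟨fun l => Classical.epsilon (· ∈ clos H l \ setBall ρ {y | y ∈ l} β), d + 1,
    fun h hh x hx t ht s hst => ?_⟩
  have hcov : ((d + 1 : ℕ) : ℕ∞) ≤ covN ρ α (prefSet x s) :=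
    ht.trans (covN_mono (prefSet_mono x hst))
  have hlh : ∀ y ∈ prefList x s, y ∈ supp h := fun y hy => by
    obtain ⟨i, -, rfl⟩ := (setOf_mem_prefList x s).subset hy
    exact hx i
  have htop := hd h hh _ hlh (by rw [setOf_mem_prefList]; exact le_trans (by norm_cast; omega) hcov)
  have hne : {y | y ∈ prefList x s}.Nonempty :=
    setOf_mem_prefList x s ▸ nonempty_of_le_covN d.succ_pos hcov
  have hp := Classical.epsilon_spec (nonempty_diff_setBall (prefList x s).finite_toSet hne htop)
  refine ⟨clos_subset_supp hh hlh hp.1, ?_⟩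
  simpa only [setOf_mem_prefList] using hp.2

lemma CovNBoundedBy.closureDim_lt_top {σ τ : X → X → ℝ} (hτσ : CovNBoundedBy τ σ)
    (hστ : CovNBoundedBy σ τ) {α β α' β' : ℝ} (hα : 0 < α) (hβ : 0 < β) (hα' : 0 < α')
    (hβ' : 0 < β') {H : Set (X → Bool)} (hH : closureDim σ α β H < ⊤) :
    closureDim τ α' β' H < ⊤ := by
  obtain ⟨d, hd⟩ := closureDim_lt_top_iff.1 hH
  obtain ⟨K, hK⟩ := hτσ.le_covN hα' hα
  exact closureDim_lt_top_iff.2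
    ⟨K * d, fun h hh l hl hcov => hστ.covN_eq_top hβ hβ' (hd h hh l hl (hK d _ hcov))⟩

lemma UnifGen.of_covNBoundedBy {σ τ : X → X → ℝ} (hσ : IsMetricDist σ)
    (hτσ : CovNBoundedBy τ σ) (hστ : CovNBoundedBy σ τ) {ε ε' δ δ' : ℝ} (hε : 0 < ε)
    (hε' : 0 < ε') (hδ : 0 < δ) (hδ' : 0 < δ') {H : Set (X → Bool)} (hH : UnifGen σ ε ε' H) :
    UnifGen τ δ δ' H := by
  obtain ⟨G, d, hG : IsUnifGenerator σ ε ε' H G d⟩ := hH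
  have : Nonempty X := ⟨G []⟩
  exact unifGen_of_closureDim_lt_top <|
    hτσ.closureDim_lt_top hστ hε (half_pos hε') hδ hδ' (hG.closureDim_lt_top hσ)

/-- For `←`, a single generator runs, on a sample, the generator of the largest sublevel set
that the sample triggers. Levels are searched only up to the sample's length, which suffices since
a sample's covering number is at most its length. -/
lemma nonUnifGen_iff {ρ : X → X → ℝ} (hρ : IsMetricDist ρ) {ε ε' : ℝ} (hε : 0 ≤ ε)
    {H : Set (X → Bool)} :
    NonUnifGen ρ ε ε' H ↔ ∃ D : (X → Bool) → ℕ, ∀ m, UnifGen ρ ε ε' {h | h ∈ H ∧ D h ≤ m} := by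
  constructor
  · rintro ⟨G, hG⟩
    choose! D hD using hG
    exact ⟨D, fun m => ⟨G, m, fun h hh x hx t ht s hst =>
      hD h hh.1 x hx t ((Nat.cast_le.2 hh.2).trans ht) s hst⟩⟩
  · rintro ⟨D, hD⟩
    choose G d hG using hD
    let level (l : List X) : ℕ :=
      Nat.findGreatest (fun m => (d m : ℕ∞) ≤ covN ρ ε {y | y ∈ l}) l.length
    refine ⟨fun l => G (level l) l, fun h hh => ⟨max (D h) (d (D h)), fun x hx t ht s hst => ?_⟩⟩
    have hcov : (max (D h) (d (D h)) : ℕ∞) ≤ covN ρ ε {y | y ∈ prefList x s} := by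
      rw [setOf_mem_prefList]
      exact_mod_cast ht.trans (covN_mono (prefSet_mono x hst))
    obtain ⟨hDcov, hdcov⟩ := max_le_iff.1 hcov
    have hDs : D h ≤ (prefList x s).length := by
      have := hDcov.trans ((setOf_mem_prefList x s).symm ▸ covN_prefSet_le hρ hε x s)
      simpa [prefList] using this
    have hlevel : D h ≤ level (prefList x s) := Nat.le_findGreatest hDs hdcov
    have htrig : (d (level (prefList x s)) : ℕ∞) ≤ covN ρ ε (prefSet x s) :=
      setOf_mem_prefList x s ▸ Nat.findGreatest_spec (P := fun m => (d m : ℕ∞) ≤ _) hDs hdcov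
    exact hG _ h ⟨hh, hlevel⟩ x hx s htrig s le_rfl

/-- in a doubling space, the UUS property and generatability are invariant
under strongly equivalent metrics. -/
theorem gen_invariant_of_equiv_metrics {X : Type*} (ρ₁ ρ₂ : X → X → ℝ)
    (hρ₁ : IsMetricDist ρ₁) (hρ₂ : IsMetricDist ρ₂)
    (c C : ℝ) (hc : 0 < c) (hC : 0 < C)
    (hequiv : ∀ x y, c * ρ₁ x y ≤ ρ₂ x y ∧ ρ₂ x y ≤ C * ρ₁ x y)
    (hdbl : Doubling ρ₁) (H : Set (X → Bool)) :
    ((∃ r : ℝ, 0 < r ∧ UUS ρ₁ H r) ↔ (∃ r' : ℝ, 0 < r' ∧ UUS ρ₂ H r')) ∧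
      (∀ ε ε' δ δ' : ℝ, 0 < ε → 0 < ε' → 0 < δ → 0 < δ' →
        (UnifGen ρ₁ ε ε' H ↔ UnifGen ρ₂ δ δ' H) ∧
          (NonUnifGen ρ₁ ε ε' H ↔ NonUnifGen ρ₂ δ δ' H)) := by
  have h₁₁ := hdbl.covNBoundedBy_self
  have h₁₂ : CovNBoundedBy ρ₁ ρ₂ := .of_mul_le hc (fun x y => (hequiv x y).1) h₁₁
  have h₂₁ : CovNBoundedBy ρ₂ ρ₁ := .of_le_mul hC (fun x y => (hequiv x y).2) h₁₁
  refine ⟨⟨fun ⟨r, hr, hH⟩ => ⟨1, one_pos, h₁₂.uus hr one_pos hH⟩,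
    fun ⟨r, hr, hH⟩ => ⟨1, one_pos, h₂₁.uus hr one_pos hH⟩⟩,
    fun ε ε' δ δ' hε hε' hδ hδ' => ?_⟩
  have unif (H' : Set (X → Bool)) : UnifGen ρ₁ ε ε' H' ↔ UnifGen ρ₂ δ δ' H' :=
    ⟨.of_covNBoundedBy hρ₁ h₂₁ h₁₂ hε hε' hδ hδ', .of_covNBoundedBy hρ₂ h₁₂ h₂₁ hδ hδ' hε hε'⟩
  refine ⟨unif H, ?_⟩
  rw [nonUnifGen_iff hρ₁ hε.le, nonUnifGen_iff hρ₂ hδ.le]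
  exact exists_congr fun D => forall_congr' fun m => unif _

end Gen
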